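/- arXiv:2512.13944 — 2 statements merged into one kernel-verified Lean document; each statement's English description precedes it below -/
import Mathlib

section
/- Let T(w) = wᵀY/n where Y = Rg + ε with ε mean-zero, Cov(ε) = σ²I, and ε independent of (R, w, g-values). Suppose w and w' both satisfy the balancing equation ΛᵀRᵀw = Λᵀf (almost surely on an event B), where g = Λh. Then, conditional on B, Var(T(w)) − Var(T(w')) = σ²(E[‖w‖² | B] − E[‖w'‖² | B])/n². In particular, a balancing weight vector of minimal norm yields the minimal conditional variance among all balancing weights. -/
open MeasureTheory ProbabilityTheory BigOperators

lemma l2_mul_integrable {Ω : Type*} [MeasurableSpace Ω] {μ : Measure Ω} {f g : Ω → ℝ}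
    (hf : MemLp f 2 μ) (hg : MemLp g 2 μ) : Integrable (fun ω => f ω * g ω) μ := by
  have h : MemLp (f • g) 1 μ := hg.smul hf
  exact memLp_one_iff_integrable.mp h

lemma aux_var {Ω : Type*} [MeasurableSpace Ω] {μ : Measure Ω} [IsProbabilityMeasure μ]
    {N : ℕ} (σ : ℝ) (w s ε : Ω → Fin N → ℝ) (Z : Ω → ℝ)
    (hindep : IndepFun (fun ω => (w ω, s ω)) ε μ)
    (hmean : ∀ i, ∫ ω, ε ω i ∂μ = 0)
    (hcov : ∀ i j, ∫ ω, ε ω i * ε ω j ∂μ = if i = j then σ ^ 2 else 0)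
    (hL2w : ∀ i, MemLp (fun ω => w ω i) 2 μ)
    (hL2ε : ∀ i, MemLp (fun ω => ε ω i) 2 μ)
    (hL2sig : MemLp (fun ω => ∑ i, w ω i * s ω i) 2 μ)
    (hZ : ∀ᵐ ω ∂μ, ∑ i, w ω i * s ω i = Z ω) :
    variance (fun ω => ∑ i, w ω i * (s ω i + ε ω i)) μ =
      (∫ ω, Z ω ^ 2 ∂μ) - (∫ ω, Z ω ∂μ) ^ 2 + σ ^ 2 * ∫ ω, ∑ i, (w ω i) ^ 2 ∂μ := by
  set SIG : Ω → ℝ := fun ω => ∑ i, w ω i * s ω i with hSIG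
  set S : Ω → ℝ := fun ω => ∑ i, w ω i * ε ω i with hS
  -- independence instances
  have ind1 : ∀ i j, IndepFun (fun ω => w ω i * w ω j) (fun ω => ε ω i * ε ω j) μ := by
    intro i j
    exact hindep.comp (φ := fun p : (Fin N → ℝ) × (Fin N → ℝ) => p.1 i * p.1 j)
      (ψ := fun e => e i * e j) (by fun_prop)
      (by fun_prop)
  have ind2 : ∀ i, IndepFun (fun ω => SIG ω * w ω i) (fun ω => ε ω i) μ := by
    intro i
    exact hindep.comp (φ := fun p : (Fin N → ℝ) × (Fin N → ℝ) => (∑ j, p.1 j * p.2 j) * p.1 i)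
      (ψ := fun e => e i) (by fun_prop) (measurable_pi_apply (X := fun _ : Fin N => ℝ) i)
  have ind3 : ∀ i, IndepFun (fun ω => w ω i) (fun ω => ε ω i) μ := by
    intro i
    exact hindep.comp (φ := fun p : (Fin N → ℝ) × (Fin N → ℝ) => p.1 i)
      (ψ := fun e => e i) (by fun_prop) (measurable_pi_apply (X := fun _ : Fin N => ℝ) i)
  -- integrability
  have intw : ∀ i, Integrable (fun ω => w ω i) μ := fun i => (hL2w i).integrable one_le_two
  have intε : ∀ i, Integrable (fun ω => ε ω i) μ := fun i => (hL2ε i).integrable one_le_two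
  have intwε : ∀ i, Integrable (fun ω => w ω i * ε ω i) μ :=
    fun i => (ind3 i).integrable_mul (intw i) (intε i)
  have intS : Integrable S μ := integrable_finset_sum _ (fun i _ => intwε i)
  have intww : ∀ i j, Integrable (fun ω => w ω i * w ω j) μ :=
    fun i j => l2_mul_integrable (hL2w i) (hL2w j)
  have intεε : ∀ i j, Integrable (fun ω => ε ω i * ε ω j) μ :=
    fun i j => l2_mul_integrable (hL2ε i) (hL2ε j)
  have intwwεε : ∀ i j, Integrable (fun ω => (w ω i * w ω j) * (ε ω i * ε ω j)) μ :=
    fun i j => (ind1 i j).integrable_mul (intww i j) (intεε i j)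
  have intSIGw : ∀ i, Integrable (fun ω => SIG ω * w ω i) μ :=
    fun i => l2_mul_integrable hL2sig (hL2w i)
  have intSIGwε : ∀ i, Integrable (fun ω => SIG ω * w ω i * ε ω i) μ :=
    fun i => (ind2 i).integrable_mul (intSIGw i) (intε i)
  have intSIGsq : Integrable (fun ω => SIG ω ^ 2) μ := by
    simpa [sq] using l2_mul_integrable hL2sig hL2sig
  have intwsq : ∀ i, Integrable (fun ω => w ω i ^ 2) μ := by
    intro i; simpa [sq] using intww i i
  -- key expectations
  have ES : ∫ ω, S ω ∂μ = 0 := by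
    rw [hS, integral_finset_sum _ (fun i _ => intwε i)]
    refine Finset.sum_eq_zero fun i _ => ?_
    have h := (ind3 i).integral_fun_mul_eq_mul_integral (intw i).aestronglyMeasurable (intε i).aestronglyMeasurable
    rw [hmean i, mul_zero] at h
    exact h
  have ESS : ∫ ω, S ω ^ 2 ∂μ = σ ^ 2 * ∫ ω, ∑ i, w ω i ^ 2 ∂μ := by
    have hSsq : ∀ ω, S ω ^ 2 = ∑ i, ∑ j, (w ω i * w ω j) * (ε ω i * ε ω j) := by
      intro ω
      rw [hS, sq, Finset.sum_mul_sum]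
      exact Finset.sum_congr rfl fun i _ => Finset.sum_congr rfl fun j _ => by ring
    simp_rw [hSsq]
    rw [integral_finset_sum _ (fun i _ => integrable_finset_sum _ (fun j _ => intwwεε i j))]
    have : ∀ i ∈ Finset.univ, (∫ ω, ∑ j, (w ω i * w ω j) * (ε ω i * ε ω j) ∂μ)
        = σ ^ 2 * ∫ ω, w ω i ^ 2 ∂μ := by
      intro i _
      rw [integral_finset_sum _ (fun j _ => intwwεε i j)]
      have : ∀ j ∈ Finset.univ, (∫ ω, (w ω i * w ω j) * (ε ω i * ε ω j) ∂μ)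
          = if j = i then σ ^ 2 * ∫ ω, w ω i ^ 2 ∂μ else 0 := by
        intro j _
        have h := (ind1 i j).integral_fun_mul_eq_mul_integral (intww i j).aestronglyMeasurable (intεε i j).aestronglyMeasurable
        rw [hcov i j] at h
        refine h.trans ?_
        by_cases hij : j = i
        · subst hij; simp [sq, mul_comm]
        · rw [if_neg (fun h => hij h.symm), if_neg hij, mul_zero]
      rw [Finset.sum_congr rfl this, Finset.sum_ite_eq' Finset.univ i
        (fun _ => σ ^ 2 * ∫ ω, w ω i ^ 2 ∂μ)]
      simp
    rw [Finset.sum_congr rfl this, ← Finset.mul_sum,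
      ← integral_finset_sum _ (fun i _ => intwsq i)]
  have ESIGS : ∫ ω, SIG ω * S ω ∂μ = 0 := by
    have : ∀ ω, SIG ω * S ω = ∑ i, SIG ω * w ω i * ε ω i := by
      intro ω; rw [hS, Finset.mul_sum]; exact Finset.sum_congr rfl fun i _ => by ring
    simp_rw [this]
    rw [integral_finset_sum _ (fun i _ => intSIGwε i)]
    refine Finset.sum_eq_zero fun i _ => ?_
    have h := (ind2 i).integral_fun_mul_eq_mul_integral (intSIGw i).aestronglyMeasurable (intε i).aestronglyMeasurable
    rw [hmean i, mul_zero] at h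
    exact h
  -- S is in L2
  have hSmeas : AEStronglyMeasurable S μ := by
    apply Finset.aestronglyMeasurable_fun_sum
    intro i _; exact (hL2w i).1.mul (hL2ε i).1
  have hL2S : MemLp S 2 μ := by
    rw [memLp_two_iff_integrable_sq hSmeas]
    have : ∀ ω, S ω ^ 2 = ∑ i, ∑ j, (w ω i * w ω j) * (ε ω i * ε ω j) := by
      intro ω
      rw [hS, sq, Finset.sum_mul_sum]
      exact Finset.sum_congr rfl fun i _ => Finset.sum_congr rfl fun j _ => by ring
    have h2 : Integrable (fun ω => ∑ i, ∑ j, (w ω i * w ω j) * (ε ω i * ε ω j)) μ :=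
      integrable_finset_sum _ (fun i _ => integrable_finset_sum _ (fun j _ => intwwεε i j))
    exact h2.congr (Filter.Eventually.of_forall fun ω => (this ω).symm)
  -- rewrite target function
  have hXeq : (fun ω => ∑ i, w ω i * (s ω i + ε ω i)) = fun ω => SIG ω + S ω := by
    funext ω; rw [hSIG, hS, ← Finset.sum_add_distrib]
    exact Finset.sum_congr rfl fun i _ => by ring
  rw [hXeq]
  have hL2X : MemLp (fun ω => SIG ω + S ω) 2 μ := hL2sig.add hL2S
  rw [variance_eq_sub hL2X]
  -- compute mean
  have hmeanX : ∫ ω, (SIG ω + S ω) ∂μ = ∫ ω, Z ω ∂μ := by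
    rw [integral_add (hL2sig.integrable one_le_two) intS, ES, add_zero]
    exact integral_congr_ae hZ
  -- compute second moment
  have hsqX : ∫ ω, (SIG ω + S ω) ^ 2 ∂μ =
      (∫ ω, Z ω ^ 2 ∂μ) + σ ^ 2 * ∫ ω, ∑ i, w ω i ^ 2 ∂μ := by
    have hptw : ∀ ω, (SIG ω + S ω) ^ 2 = SIG ω ^ 2 + (2 * (SIG ω * S ω) + S ω ^ 2) := by
      intro ω; ring
    simp_rw [hptw]
    have intSsq : Integrable (fun ω => S ω ^ 2) μ := by
      rw [← memLp_two_iff_integrable_sq hSmeas]; exact hL2S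
    have intSIGS : Integrable (fun ω => SIG ω * S ω) μ := by
      have : ∀ ω, SIG ω * S ω = ∑ i, SIG ω * w ω i * ε ω i := by
        intro ω; rw [hS, Finset.mul_sum]; exact Finset.sum_congr rfl fun i _ => by ring
      exact (integrable_finset_sum _ (fun i _ => intSIGwε i)).congr
        (Filter.Eventually.of_forall fun ω => (this ω).symm)
    have i1 : Integrable (fun ω => 2 * (SIG ω * S ω) + S ω ^ 2) μ :=
      (intSIGS.const_mul 2).add intSsq
    rw [integral_add intSIGsq i1, integral_add (intSIGS.const_mul 2) intSsq,
      integral_const_mul, ESIGS, mul_zero, zero_add, ESS]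
    congr 1
    refine integral_congr_ae (hZ.mono fun ω h => ?_)
    simp only [hSIG] at h ⊢
    rw [h]
  simp only [Pi.pow_apply]
  rw [hsqX, hmeanX]
  ring

/-- UMVUE property of balancing weights. Conditional on the event `B` on which both `w`
and `w'` satisfy the balancing equation (so that their signal parts `∑ i, w i * s i`
agree with a common quantity `Z`), the difference of the conditional variances of the
weighting estimators `T(w) = wᵀY/n` and `T(w')` with `Y = s + ε`, homoskedastic noise
`ε` with variance `σ²` independent of the weights and signals, equals
`σ² (E[‖w‖² | B] − E[‖w'‖² | B]) / n²`. In particular a minimal-norm balancing weight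
yields minimal conditional variance. -/
theorem stmt8 {Ω : Type*} [MeasurableSpace Ω] (P : Measure Ω) [IsProbabilityMeasure P]
    {N : ℕ} (n : ℝ) (hn : n ≠ 0) (σ : ℝ)
    (B : Set Ω) (hBmeas : MeasurableSet B) (hPB : P B ≠ 0)
    (w w' s ε : Ω → Fin N → ℝ) (Z : Ω → ℝ)
    (hindep : IndepFun (fun ω => (w ω, w' ω, s ω)) ε (P[|B]))
    (hmean : ∀ i, ∫ ω, ε ω i ∂(P[|B]) = 0)
    (hcov : ∀ i j, ∫ ω, ε ω i * ε ω j ∂(P[|B]) = if i = j then σ ^ 2 else 0)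
    (hL2w : ∀ i, MemLp (fun ω => w ω i) 2 (P[|B]))
    (hL2w' : ∀ i, MemLp (fun ω => w' ω i) 2 (P[|B]))
    (hL2ε : ∀ i, MemLp (fun ω => ε ω i) 2 (P[|B]))
    (hL2sig : MemLp (fun ω => ∑ i, w ω i * s ω i) 2 (P[|B]))
    (hL2sig' : MemLp (fun ω => ∑ i, w' ω i * s ω i) 2 (P[|B]))
    (hbal : ∀ ω ∈ B, (∑ i, w ω i * s ω i = Z ω) ∧ (∑ i, w' ω i * s ω i = Z ω)) :
    (variance (fun ω => (∑ i, w ω i * (s ω i + ε ω i)) / n) (P[|B]) -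
        variance (fun ω => (∑ i, w' ω i * (s ω i + ε ω i)) / n) (P[|B]) =
      σ ^ 2 * ((∫ ω, ∑ i, (w ω i) ^ 2 ∂(P[|B])) -
          (∫ ω, ∑ i, (w' ω i) ^ 2 ∂(P[|B]))) / n ^ 2) ∧
    ((∫ ω, ∑ i, (w ω i) ^ 2 ∂(P[|B])) ≤ (∫ ω, ∑ i, (w' ω i) ^ 2 ∂(P[|B])) →
      variance (fun ω => (∑ i, w ω i * (s ω i + ε ω i)) / n) (P[|B]) ≤
        variance (fun ω => (∑ i, w' ω i * (s ω i + ε ω i)) / n) (P[|B])) := by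
  haveI : IsProbabilityMeasure (P[|B]) := cond_isProbabilityMeasure hPB
  have hB : ∀ᵐ ω ∂(P[|B]), ω ∈ B := by
    rw [ae_iff]
    have hc : {ω | ¬ ω ∈ B} = Bᶜ := rfl
    rw [hc, cond_apply hBmeas, Set.inter_compl_self, measure_empty, mul_zero]
  have hZ : ∀ᵐ ω ∂(P[|B]), ∑ i, w ω i * s ω i = Z ω := hB.mono fun ω h => (hbal ω h).1
  have hZ' : ∀ᵐ ω ∂(P[|B]), ∑ i, w' ω i * s ω i = Z ω := hB.mono fun ω h => (hbal ω h).2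
  have hind1 : IndepFun (fun ω => (w ω, s ω)) ε (P[|B]) :=
    hindep.comp (φ := fun p : (Fin N → ℝ) × (Fin N → ℝ) × (Fin N → ℝ) => (p.1, p.2.2))
      (ψ := id) (by fun_prop) measurable_id
  have hind2 : IndepFun (fun ω => (w' ω, s ω)) ε (P[|B]) :=
    hindep.comp (φ := fun p : (Fin N → ℝ) × (Fin N → ℝ) × (Fin N → ℝ) => (p.2.1, p.2.2))
      (ψ := id) (by fun_prop) measurable_id
  have hV := aux_var σ w s ε Z hind1 hmean hcov hL2w hL2ε hL2sig hZ
  have hV' := aux_var σ w' s ε Z hind2 hmean hcov hL2w' hL2ε hL2sig' hZ'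
  have hsm : ∀ f : Ω → ℝ, variance (fun ω => f ω / n) (P[|B]) = n⁻¹ ^ 2 * variance f (P[|B]) := by
    intro f
    have : (fun ω => f ω / n) = n⁻¹ • f := by
      funext ω; simp [div_eq_inv_mul]
    rw [this, variance_smul]
  have key : variance (fun ω => (∑ i, w ω i * (s ω i + ε ω i)) / n) (P[|B]) -
      variance (fun ω => (∑ i, w' ω i * (s ω i + ε ω i)) / n) (P[|B]) =
      σ ^ 2 * ((∫ ω, ∑ i, (w ω i) ^ 2 ∂(P[|B])) - (∫ ω, ∑ i, (w' ω i) ^ 2 ∂(P[|B]))) / n ^ 2 := by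
    rw [hsm, hsm, hV, hV']
    field_simp
    ring
  refine ⟨key, fun h => ?_⟩
  have hle : σ ^ 2 * ((∫ ω, ∑ i, (w ω i) ^ 2 ∂(P[|B])) -
      (∫ ω, ∑ i, (w' ω i) ^ 2 ∂(P[|B]))) / n ^ 2 ≤ 0 := by
    apply div_nonpos_of_nonpos_of_nonneg _ (sq_nonneg n)
    exact mul_nonpos_iff.2 (Or.inl ⟨sq_nonneg σ, sub_nonpos.2 h⟩)
  linarith [key]
end

section
/- Let {0,1}^m be the set of cluster treatment patterns, φ : {0,1}^m → S a function into a finite set S, e : {0,1}^m → (0,1) with ∑_a e(a) = 1, and f : {0,1}^m → ℝ. Define e_φ(a) = ∑_{a' : φ(a') = φ(a)} e(a') and f_φ(a) = ∑_{a' : φ(a') = φ(a)} f(a'). Let Λ(a) ∈ ℝ^{|S|} be the indicator vector of φ(a), let D = diag(e(a))_a, and let Λ be the matrix with rows Λ(a)ᵀ. Then ΛᵀDΛ = diag((e_φ(s))_{s ∈ range(φ)} extended over S-values attained), this matrix restricted to attained values is invertible, and for the observed pattern A, Λ(A)ᵀ (ΛᵀDΛ)⁻¹ Λᵀ (f(a))_a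 = f_φ(A)/e_φ(A). -/
open Matrix BigOperators

/-- Simplification of the weighted projection weights under a discrete exposure
mapping `φ`. With `Λ` the matrix of indicator rows `Λ a s = 1{φ a = s}`, `D` the
diagonal matrix of the propensity scores `e`, `ΛᵀDΛ` is the diagonal matrix of the
marginalized propensities `e_φ`, it is invertible, and for the observed pattern `A`,
`Λ(A)ᵀ (ΛᵀDΛ)⁻¹ Λᵀ f = f_φ(A) / e_φ(A)`. -/
theorem stmt17 {m : ℕ} {S : Type*} [Fintype S] [DecidableEq S]
    (φ : (Fin m → Bool) → S) (hsurj : Function.Surjective φ)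
    (e : (Fin m → Bool) → ℝ) (hpos : ∀ a, 0 < e a) (hsum : ∑ a, e a = 1)
    (f : (Fin m → Bool) → ℝ) (A : Fin m → Bool) :
    letI Λ : Matrix (Fin m → Bool) S ℝ := Matrix.of fun a s => if φ a = s then 1 else 0
    letI D : Matrix (Fin m → Bool) (Fin m → Bool) ℝ := Matrix.diagonal e
    (Λᵀ * D * Λ = Matrix.diagonal fun s => ∑ a, if φ a = s then e a else 0) ∧
    IsUnit (Λᵀ * D * Λ) ∧
    ((fun s => Λ A s) ⬝ᵥ (Λᵀ * D * Λ)⁻¹.mulVec (Λᵀ.mulVec f)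
      = (∑ a, if φ a = φ A then f a else 0) / (∑ a, if φ a = φ A then e a else 0)) := by
  set Λ : Matrix (Fin m → Bool) S ℝ := Matrix.of fun a s => if φ a = s then 1 else 0 with hΛ
  set D : Matrix (Fin m → Bool) (Fin m → Bool) ℝ := Matrix.diagonal e with hD
  set eφ : S → ℝ := fun s => ∑ a, if φ a = s then e a else 0 with heφ
  have heq : Λᵀ * D * Λ = Matrix.diagonal eφ := by
    ext s t
    simp only [Matrix.mul_apply, Matrix.transpose_apply, Matrix.diagonal_apply, Λ, D,
      Matrix.of_apply, Finset.sum_ite_eq', Finset.mem_univ, if_true]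
    by_cases hst : s = t
    · subst hst
      simp [eφ]
      apply Finset.sum_congr rfl
      intro a _
      by_cases h : φ a = s <;> simp [h]
    · simp [hst]
      apply Finset.sum_eq_zero
      intro a _
      by_cases h : φ a = s <;> by_cases h' : φ a = t <;> simp [h, h'] <;>
        first
          | exact fun hh => absurd hh hst
          | exact fun hh => absurd hh.symm hst
  have heφpos : ∀ s, 0 < eφ s := by
    intro s
    obtain ⟨a, ha⟩ := hsurj s
    apply Finset.sum_pos'
    · intro i _
      by_cases h : φ i = s <;> simp [h, (hpos i).le]
    · exact ⟨a, Finset.mem_univ a, by simp [ha, hpos a]⟩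
  have hne : ∀ s, eφ s ≠ 0 := fun s => (heφpos s).ne'
  have hunit : IsUnit (Matrix.diagonal eφ) := by
    rw [Matrix.isUnit_diagonal]
    exact IsUnit.of_mul_eq_one (fun s => (eφ s)⁻¹)
      (funext fun s => mul_inv_cancel₀ (hne s))
  refine ⟨heq, heq ▸ hunit, ?_⟩
  have hinv : (Matrix.diagonal eφ)⁻¹ = Matrix.diagonal (fun s => (eφ s)⁻¹) := by
    apply Matrix.inv_eq_right_inv
    rw [Matrix.diagonal_mul_diagonal]
    convert Matrix.diagonal_one using 2
    exact funext fun s => mul_inv_cancel₀ (hne s)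
  rw [heq, hinv]
  have : ∀ s, Λᵀ.mulVec f s = ∑ a, if φ a = s then f a else 0 := by
    intro s
    simp only [Matrix.mulVec, dotProduct, Matrix.transpose_apply, Λ, Matrix.of_apply,
      ite_mul, one_mul, zero_mul]
  simp only [Matrix.mulVec_diagonal, dotProduct, this, Λ, Matrix.of_apply, ite_mul, one_mul,
    zero_mul, Finset.sum_ite_eq, Finset.mem_univ, if_true]
  rw [div_eq_mul_inv, mul_comm]
end
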